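/- Let (α, T, N, B, κ, τ) be a timelike Frenet curve in E₁³ with κ(s) ≠ 0 and τ(s) ≠ 0 for all s and with 1/κ and 1/τ twice differentiable, and define U(s) = −(1/κ(s))·T(s) − (1/τ(s))·B(s). If there is a function μ : ℝ → ℝ with U''(s) = μ(s)·N(s) for all s, then (1/κ)'' ≡ 0 and (1/τ)'' ≡ 0, so there exist constants a, b, c, d ∈ ℝ with 1/κ(s) = a·s + b and 1/τ(s) = c·s + d for all s; that is, α is a logarithmic spiral in E₁³. -/

import Mathlib

/-- The Minkowski bilinear form on ℝ³: `⟨x,y⟩ = −x₀y₀ + x₁y₁ + x₂y₂`. -/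
def mink (x y : Fin 3 → ℝ) : ℝ := -(x 0 * y 0) + x 1 * y 1 + x 2 * y 2

/-!
Differentiating `U = -(1/κ) T - (1/τ) B` with the Frenet equations, the two `N`-terms
`-(1/κ) κ N` and `(1/τ) τ N` cancel, so `U' = -(1/κ)' T - (1/τ)' B`. Differentiating once more,
the `T`- and `B`-components of `U''` are `-(1/κ)''` and `-(1/τ)''`; as `U''` is a multiple of `N`,
pairing with `T` and with `B` kills both. A function with vanishing second derivative is affine.
-/

lemma mink_add_left (x y z : Fin 3 → ℝ) : mink (x + y) z = mink x z + mink y z := by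
  simp only [mink, Pi.add_apply]; ring

lemma mink_sub_left (x y z : Fin 3 → ℝ) : mink (x - y) z = mink x z - mink y z := by
  simp only [mink, Pi.sub_apply]; ring

lemma mink_smul_left (a : ℝ) (x y : Fin 3 → ℝ) : mink (a • x) y = a * mink x y := by
  simp only [mink, Pi.smul_apply, smul_eq_mul]; ring

lemma mink_comm (x y : Fin 3 → ℝ) : mink x y = mink y x := by
  simp only [mink]; ring

lemma eq_zero_of_neg_smul_sub_smul_add_smul_eq_smul {T N B : Fin 3 → ℝ}
    (hTT : mink T T = -1) (hBB : mink B B = 1) (hTN : mink T N = 0) (hTB : mink T B = 0)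
    (hNB : mink N B = 0) {a b c μ : ℝ} (h : -a • T - b • B + c • N = μ • N) :
    a = 0 ∧ b = 0 := by
  have hNT : mink N T = 0 := mink_comm N T ▸ hTN
  have hBT : mink B T = 0 := mink_comm B T ▸ hTB
  have hT := congrArg (mink · T) h
  have hB := congrArg (mink · B) h
  simp only [mink_add_left, mink_sub_left, mink_smul_left] at hT hB
  rw [hTT, hBT, hNT] at hT
  rw [hTB, hBB, hNB] at hB
  constructor <;> linarith

section Frame

variable {E : Type*} [NormedAddCommGroup E] [NormedSpace ℝ E] {T N B : ℝ → E} {κ τ : ℝ → ℝ}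
  {s : ℝ}

lemma hasDerivAt_neg_smul_tangent_sub_smul_binormal {f g : ℝ → ℝ} {f' g' : ℝ}
    (hT : HasDerivAt T (κ s • N s) s) (hB : HasDerivAt B (-τ s • N s) s)
    (hf : HasDerivAt f f' s) (hg : HasDerivAt g g' s) :
    HasDerivAt (fun u => -f u • T u - g u • B u)
      (-f' • T s - g' • B s + (g s * τ s - f s * κ s) • N s) s := by
  refine ((hf.neg.smul hT).sub (hg.smul hB)).congr_deriv ?_
  simp only [smul_smul, sub_smul, neg_smul, smul_neg, Pi.neg_apply, neg_mul]
  abel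

lemma hasDerivAt_neg_inv_smul_tangent_sub_inv_smul_binormal {f' g' : ℝ}
    (hT : HasDerivAt T (κ s • N s) s) (hB : HasDerivAt B (-τ s • N s) s)
    (hκ : κ s ≠ 0) (hτ : τ s ≠ 0)
    (hf : HasDerivAt (fun u => (κ u)⁻¹) f' s) (hg : HasDerivAt (fun u => (τ u)⁻¹) g' s) :
    HasDerivAt (fun u => -(κ u)⁻¹ • T u - (τ u)⁻¹ • B u) (-f' • T s - g' • B s) s := by
  convert hasDerivAt_neg_smul_tangent_sub_smul_binormal hT hB hf hg using 1
  rw [inv_mul_cancel₀ hκ, inv_mul_cancel₀ hτ, sub_self, zero_smul, add_zero]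

end Frame

lemma exists_affine_of_deriv_deriv_eq_zero {f : ℝ → ℝ} (hf : Differentiable ℝ f)
    (hf' : Differentiable ℝ (deriv f)) (h : ∀ s, deriv (deriv f) s = 0) :
    ∃ a b : ℝ, ∀ s, f s = a * s + b := by
  have hconst (s : ℝ) : deriv f s = deriv f 0 := is_const_of_deriv_eq_zero hf' h s 0
  have hline (s : ℝ) : HasDerivAt (fun u => f u - deriv f 0 * u) 0 s := by
    refine ((hf s).hasDerivAt.sub ((hasDerivAt_id s).const_mul (deriv f 0))).congr_deriv ?_
    rw [hconst s, mul_one, sub_self]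
  refine ⟨deriv f 0, f 0, fun s => ?_⟩
  have := is_const_of_deriv_eq_zero (fun u => (hline u).differentiableAt)
    (fun u => (hline u).deriv) s 0
  simp only [mul_zero, sub_zero] at this
  linarith

theorem U_geodesic_implies_logarithmic_spiral_timelike_general
    (T N B : ℝ → Fin 3 → ℝ) (κ τ : ℝ → ℝ)
    (hT : ∀ s, HasDerivAt T (κ s • N s) s)
    (hB : ∀ s, HasDerivAt B (-τ s • N s) s)
    (hTT : ∀ s, mink (T s) (T s) = -1)
    (hBB : ∀ s, mink (B s) (B s) = 1)
    (hTN : ∀ s, mink (T s) (N s) = 0)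
    (hTB : ∀ s, mink (T s) (B s) = 0)
    (hNB : ∀ s, mink (N s) (B s) = 0)
    (hκ0 : ∀ s, κ s ≠ 0) (hτ0 : ∀ s, τ s ≠ 0)
    (hκinv : ContDiff ℝ 2 (fun s : ℝ => (κ s)⁻¹))
    (hτinv : ContDiff ℝ 2 (fun s : ℝ => (τ s)⁻¹))
    (U : ℝ → Fin 3 → ℝ)
    (hU : ∀ s : ℝ, U s = -(κ s)⁻¹ • T s - (τ s)⁻¹ • B s)
    (μ : ℝ → ℝ) (hμ : ∀ s : ℝ, deriv (deriv U) s = μ s • N s) :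
    (∀ s : ℝ, deriv (deriv (fun u : ℝ => (κ u)⁻¹)) s = 0) ∧
    (∀ s : ℝ, deriv (deriv (fun u : ℝ => (τ u)⁻¹)) s = 0) ∧
      ∃ a b c d : ℝ, ∀ s : ℝ, (κ s)⁻¹ = a * s + b ∧ (τ s)⁻¹ = c * s + d := by
  set f : ℝ → ℝ := fun s => (κ s)⁻¹
  set g : ℝ → ℝ := fun s => (τ s)⁻¹
  have hf := hκinv.differentiable two_ne_zero
  have hg := hτinv.differentiable two_ne_zero
  have hf' := hκinv.differentiable_deriv_two
  have hg' := hτinv.differentiable_deriv_two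
  have hU' : deriv U = fun s => -deriv f s • T s - deriv g s • B s := by
    rw [funext hU]
    exact funext fun s => (hasDerivAt_neg_inv_smul_tangent_sub_inv_smul_binormal (hT s) (hB s)
      (hκ0 s) (hτ0 s) (hf s).hasDerivAt (hg s).hasDerivAt).deriv
  have hderiv_deriv (s : ℝ) : deriv (deriv f) s = 0 ∧ deriv (deriv g) s = 0 := by
    have hU'' := hasDerivAt_neg_smul_tangent_sub_smul_binormal (hT s) (hB s)
      (hf' s).hasDerivAt (hg' s).hasDerivAt
    rw [← hU'] at hU''
    exact eq_zero_of_neg_smul_sub_smul_add_smul_eq_smul (hTT s) (hBB s) (hTN s) (hTB s)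
      (hNB s) (hU''.deriv.symm.trans (hμ s))
  obtain ⟨a, b, hab⟩ := exists_affine_of_deriv_deriv_eq_zero hf hf' fun s => (hderiv_deriv s).1
  obtain ⟨c, d, hcd⟩ := exists_affine_of_deriv_deriv_eq_zero hg hg' fun s => (hderiv_deriv s).2
  exact ⟨fun s => (hderiv_deriv s).1, fun s => (hderiv_deriv s).2, a, b, c, d,
    fun s => ⟨hab s, hcd s⟩⟩

/-- For a timelike Frenet curve `(α, T, N, B, κ, τ)` in `E₁³` with nonvanishing
`κ, τ` and twice differentiable radii `1/κ`, `1/τ`, if the second derivative of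
`U(s) = −(1/κ(s))·T(s) − (1/τ(s))·B(s)` is everywhere proportional to the normal
(`U'' = μ·N`), then `(1/κ)'' ≡ 0` and `(1/τ)'' ≡ 0`, so `1/κ` and `1/τ` are
affine functions of arc length: `α` is a logarithmic spiral in `E₁³`. -/
theorem U_geodesic_implies_logarithmic_spiral_timelike
    (α T N B : ℝ → Fin 3 → ℝ) (κ τ : ℝ → ℝ)
    (hα : ∀ s, HasDerivAt α (T s) s)
    (hT : ∀ s, HasDerivAt T (κ s • N s) s)
    (hN : ∀ s, HasDerivAt N (κ s • T s + τ s • B s) s)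
    (hB : ∀ s, HasDerivAt B (-τ s • N s) s)
    (hTT : ∀ s, mink (T s) (T s) = -1)
    (hNN : ∀ s, mink (N s) (N s) = 1)
    (hBB : ∀ s, mink (B s) (B s) = 1)
    (hTN : ∀ s, mink (T s) (N s) = 0)
    (hTB : ∀ s, mink (T s) (B s) = 0)
    (hNB : ∀ s, mink (N s) (B s) = 0)
    (hκ0 : ∀ s, κ s ≠ 0) (hτ0 : ∀ s, τ s ≠ 0)
    (hκinv : ContDiff ℝ 2 (fun s : ℝ => (κ s)⁻¹))
    (hτinv : ContDiff ℝ 2 (fun s : ℝ => (τ s)⁻¹))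
    (U : ℝ → Fin 3 → ℝ)
    (hU : ∀ s : ℝ, U s = -(κ s)⁻¹ • T s - (τ s)⁻¹ • B s)
    (μ : ℝ → ℝ) (hμ : ∀ s : ℝ, deriv (deriv U) s = μ s • N s) :
    (∀ s : ℝ, deriv (deriv (fun u : ℝ => (κ u)⁻¹)) s = 0) ∧
    (∀ s : ℝ, deriv (deriv (fun u : ℝ => (τ u)⁻¹)) s = 0) ∧
      ∃ a b c d : ℝ, ∀ s : ℝ, (κ s)⁻¹ = a * s + b ∧ (τ s)⁻¹ = c * s + d :=
  U_geodesic_implies_logarithmic_spiral_timelike_general T N B κ τ hT hB hTT hBB hTN hTB hNB hκ0 hτ0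
    hκinv hτinv U hU μ hμ
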